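/- arXiv:math/0007142 — 5 statements merged into one kernel-verified Lean document; each statement's English description precedes it below -/
import Mathlib

section
/- For a zero-dimensional ideal I in a polynomial ring k[x₁,…,xₙ] over a field k, the number of points of the vanishing set of I in the algebraic closure of k is at most the k-vector space dimension of k[x₁,…,xₙ]/I. -/
/-! Evaluation at a point of `V(I)` factors through `A = k[x₁,…,xₙ]/I`, and distinct points give
distinct `k`-algebra maps `A → k̄` since they differ on some `xᵢ`. By Dedekind's independence of
characters these maps are `k̄`-linearly independent in `Hom_k(A, k̄)`, a `k̄`-space of dimension
`dim_k A`. -/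

open Module

namespace MvPolynomial

variable {σ k K : Type*} [Field k] [Field K] [Algebra k K]

noncomputable def zeroLocusToAlgHom (I : Ideal (MvPolynomial σ k)) :
    zeroLocus K I → (MvPolynomial σ k ⧸ I →ₐ[k] K) :=
  fun x => Ideal.Quotient.liftₐ I (aeval x.1) x.2

@[simp]
theorem zeroLocusToAlgHom_mk (I : Ideal (MvPolynomial σ k)) (x : zeroLocus K I)
    (f : MvPolynomial σ k) : zeroLocusToAlgHom I x (Ideal.Quotient.mk I f) = aeval x.1 f :=
  Ideal.Quotient.liftₐ_apply _ _ _ _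

theorem zeroLocusToAlgHom_injective (I : Ideal (MvPolynomial σ k)) :
    Function.Injective (zeroLocusToAlgHom (K := K) I) := by
  intro x y hxy
  ext i
  simpa using congr($hxy (Ideal.Quotient.mk I (X i)))

variable (K) (I : Ideal (MvPolynomial σ k)) [FiniteDimensional k (MvPolynomial σ k ⧸ I)]

theorem finite_zeroLocus : (zeroLocus K I).Finite :=
  Set.finite_coe_iff.mp <| Finite.of_injective _ (zeroLocusToAlgHom_injective I)

theorem ncard_zeroLocus_le_finrank :
    (zeroLocus K I).ncard ≤ finrank k (MvPolynomial σ k ⧸ I) :=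
  calc (zeroLocus K I).ncard
      = Nat.card (zeroLocus K I) := (Nat.card_coe_set_eq _).symm
    _ ≤ Nat.card (MvPolynomial σ k ⧸ I →ₐ[k] K) :=
      Nat.card_le_card_of_injective _ (zeroLocusToAlgHom_injective I)
    _ ≤ finrank k (MvPolynomial σ k ⧸ I) := card_algHom_le_finrank k _ K

end MvPolynomial

/-- For a zero-dimensional ideal `I` in `k[x₁,…,xₙ]`, the number of points of `V(I)` in the
algebraic closure of `k` is at most `dim_k k[x₁,…,xₙ]/I`. -/
theorem stmt_1 {k : Type*} [Field k] (n : ℕ) (I : Ideal (MvPolynomial (Fin n) k))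
    (hfin : FiniteDimensional k (MvPolynomial (Fin n) k ⧸ I)) :
    ({ξ : Fin n → AlgebraicClosure k | ∀ f ∈ I, MvPolynomial.aeval ξ f = 0}).Finite ∧
    ({ξ : Fin n → AlgebraicClosure k | ∀ f ∈ I, MvPolynomial.aeval ξ f = 0}).ncard ≤
      Module.finrank k (MvPolynomial (Fin n) k ⧸ I) :=
  ⟨MvPolynomial.finite_zeroLocus _ I, MvPolynomial.ncard_zeroLocus_le_finrank _ I⟩
end

section
/- (Stickelberger, eigenvalue part) Let k be an algebraically closed field, I a zero-dimensional radical ideal in k[x₁,…,xₙ], A = k[x₁,…,xₙ]/I, and h ∈ k[x₁,…,xₙ]. Then the set of eigenvalues of the multiplication operator m_h on A equals the set of values {h(ξ) : ξ ∈ V(I)}. -/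
/-!
For a finite-dimensional algebra the eigenvalues of left multiplication by `a` form the spectrum
of `a`. So `μ` is an eigenvalue of `m_h` iff `h - μ` is not a unit of `A`, i.e. iff the ideal
`(h - μ) + I` is proper, and by the weak Nullstellensatz this holds iff it has a common zero `ξ`:
a point of `V(I)` with `h(ξ) = μ`.
-/

theorem Module.End.hasEigenvalue_mulLeft_iff {k A : Type*} [Field k] [Ring A] [Algebra k A]
    [FiniteDimensional k A] {a : A} {μ : k} :
    Module.End.HasEigenvalue (LinearMap.mulLeft k a) μ ↔ μ ∈ spectrum k a := by
  rw [hasEigenvalue_iff_mem_spectrum, spectrum.mem_iff, spectrum.mem_iff,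
    ← Algebra.lmul_isUnit_iff (R := k) (x := algebraMap k A μ - a), map_sub, AlgHom.commutes]
  rfl

theorem Ideal.Quotient.isUnit_mk_iff {R : Type*} [CommRing R] {I : Ideal R} {f : R} :
    IsUnit (Ideal.Quotient.mk I f) ↔ Ideal.span {f} ⊔ I = ⊤ := by
  rw [isUnit_iff_exists_inv, Ideal.eq_top_iff_one, Ideal.mem_span_singleton_sup]
  constructor
  · rintro ⟨b, hb⟩
    obtain ⟨a, rfl⟩ := Ideal.Quotient.mk_surjective b
    refine ⟨a, 1 - a * f, ?_, by ring⟩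
    rw [← Ideal.Quotient.eq_zero_iff_mem, map_sub, map_one, map_mul, mul_comm, hb, sub_self]
  · rintro ⟨a, b, hb, hab⟩
    refine ⟨Ideal.Quotient.mk I a, ?_⟩
    rw [← map_mul, mul_comm, ← map_one (Ideal.Quotient.mk I), ← hab, map_add,
      Ideal.Quotient.eq_zero_iff_mem.mpr hb, add_zero]

namespace MvPolynomial

variable {σ k K : Type*} [Field k] [Field K] [Algebra k K]

theorem mem_zeroLocus_iff_le_vanishingIdeal {I : Ideal (MvPolynomial σ k)} {x : σ → K} :
    x ∈ zeroLocus K I ↔ I ≤ vanishingIdeal k {x} := by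
  rw [← Set.singleton_subset_iff, ← le_zeroLocus_iff_le_vanishingIdeal]

theorem zeroLocus_span_singleton_sup (f : MvPolynomial σ k) (I : Ideal (MvPolynomial σ k)) :
    zeroLocus K (Ideal.span {f} ⊔ I) = {x | aeval x f = 0} ∩ zeroLocus K I := by
  ext x
  simp only [mem_zeroLocus_iff_le_vanishingIdeal, sup_le_iff, Ideal.span_singleton_le_iff_mem,
    mem_vanishingIdeal_singleton_iff, Set.mem_inter_iff, Set.mem_ofPred_eq]

theorem zeroLocus_nonempty_iff [Finite σ] [IsAlgClosed k] {J : Ideal (MvPolynomial σ k)} :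
    (zeroLocus k J).Nonempty ↔ J ≠ ⊤ := by
  constructor
  · rintro ⟨x, hx⟩ rfl
    simp at hx
  · intro hJ
    obtain ⟨M, hM, hJM⟩ := J.exists_le_maximal hJ
    obtain ⟨x, rfl⟩ := eq_vanishingIdeal_singleton_of_isMaximal k hM
    exact ⟨x, zeroLocus_anti_mono hJM (zeroLocus_vanishingIdeal_le _ rfl)⟩

end MvPolynomial

open MvPolynomial in
theorem stmt_3_general {k : Type*} [Field k] [IsAlgClosed k] (n : ℕ)
    (I : Ideal (MvPolynomial (Fin n) k))
    (hfin : FiniteDimensional k (MvPolynomial (Fin n) k ⧸ I))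
    (h : MvPolynomial (Fin n) k) :
    {μ : k | Module.End.HasEigenvalue
        (LinearMap.mulLeft k (Ideal.Quotient.mk I h)) μ} =
      (fun ξ => MvPolynomial.eval ξ h) ''
        {ξ : Fin n → k | ∀ f ∈ I, MvPolynomial.eval ξ f = 0} := by
  ext μ
  have hsub : algebraMap k _ μ - Ideal.Quotient.mk I h = Ideal.Quotient.mk I (C μ - h) := by
    rw [map_sub, ← algebraMap_eq, Ideal.Quotient.mk_algebraMap]
  rw [Set.mem_ofPred_eq, Module.End.hasEigenvalue_mulLeft_iff, spectrum.mem_iff, hsub,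
    Ideal.Quotient.isUnit_mk_iff, ← ne_eq, ← zeroLocus_nonempty_iff,
    zeroLocus_span_singleton_sup]
  simp only [Set.Nonempty, Set.mem_inter_iff, Set.mem_ofPred_eq, mem_zeroLocus_iff, map_sub,
    aeval_C, Algebra.algebraMap_self, RingHom.id_apply, sub_eq_zero, Set.mem_image]
  -- over `k` itself, `aeval ξ` and `eval ξ` agree definitionally
  exact exists_congr fun ξ => and_comm.trans (and_congr_right' eq_comm)

/-- (Stickelberger, eigenvalue part) For an algebraically closed field `k`, a zero-dimensional
radical ideal `I ⊆ k[x₁,…,xₙ]`, and `h ∈ k[x₁,…,xₙ]`, the eigenvalues of the multiplication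
operator `m_h` on `A = k[x₁,…,xₙ]/I` are exactly the values `h(ξ)` for `ξ ∈ V(I)`. -/
theorem stmt_3 {k : Type*} [Field k] [IsAlgClosed k] (n : ℕ)
    (I : Ideal (MvPolynomial (Fin n) k))
    (hrad : I.IsRadical)
    (hfin : FiniteDimensional k (MvPolynomial (Fin n) k ⧸ I))
    (h : MvPolynomial (Fin n) k) :
    {μ : k | Module.End.HasEigenvalue
        (LinearMap.mulLeft k (Ideal.Quotient.mk I h)) μ} =
      (fun ξ => MvPolynomial.eval ξ h) ''
        {ξ : Fin n → k | ∀ f ∈ I, MvPolynomial.eval ξ f = 0} :=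
  stmt_3_general n I hfin h
end

section
/- (Shape Lemma, radicality criterion) With I generated by g(x₁), x₂ − g₂(x₁), …, xₙ − gₙ(x₁) as above, the ideal I is radical if and only if g is squarefree. -/
/-! The evaluation `ψ : k[x₀,…,xₙ] → k[X]`, `x₀ ↦ X`, `xᵢ₊₁ ↦ gᵢ`, has the section `X ↦ x₀`, and
modulo `I` every polynomial is congruent to the image of its evaluation under that section, since
`xᵢ₊₁ ≡ gᵢ(x₀)`. Hence `I = ψ⁻¹((g))` with `ψ` surjective, so `I` is radical iff `(g)` is, that is,
iff `g` is squarefree. -/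

open Polynomial

namespace Ideal

theorem isRadical_comap_iff_of_surjective {R S F : Type*} [CommSemiring R] [CommSemiring S]
    [FunLike F R S] [RingHomClass F R S] {f : F} (hf : Function.Surjective f) {K : Ideal S} :
    (K.comap f).IsRadical ↔ K.IsRadical := by
  simp only [← radical_eq_iff, ← comap_radical]
  exact (comap_injective_of_surjective f hf).eq_iff

theorem eq_comap_of_sub_mem {A B F G : Type*} [Ring A] [Ring B] [FunLike F A B]
    [RingHomClass F A B] [FunLike G B A] [RingHomClass G B A] {ψ : F} {σ : G}
    {I : Ideal A} {K : Ideal B} (hI : I ≤ K.comap ψ) (hK : K.map σ ≤ I)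
    (hsub : ∀ a, a - σ (ψ a) ∈ I) : I = K.comap ψ := by
  refine le_antisymm hI fun a ha => ?_
  simpa using I.add_mem (hsub a) (hK (mem_map_of_mem σ ha))

end Ideal

namespace ShapeLemma

variable {R : Type*} [CommRing R] {n : ℕ}

noncomputable def shapeEval (gi : Fin n → R[X]) : MvPolynomial (Fin (n + 1)) R →ₐ[R] R[X] :=
  MvPolynomial.aeval (Fin.cons X gi)

noncomputable def shapeIdeal (g : R[X]) (gi : Fin n → R[X]) :
    Ideal (MvPolynomial (Fin (n + 1)) R) :=
  Ideal.span ({aeval (MvPolynomial.X 0) g} ∪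
    Set.range fun i : Fin n => MvPolynomial.X i.succ - aeval (MvPolynomial.X 0) (gi i))

theorem shapeEval_aeval_X_zero (gi : Fin n → R[X]) (q : R[X]) :
    shapeEval gi (aeval (MvPolynomial.X 0) q) = q := by
  rw [← aeval_algHom_apply]
  simp [shapeEval]

theorem shapeEval_surjective (gi : Fin n → R[X]) : Function.Surjective (shapeEval gi) :=
  Function.LeftInverse.surjective (shapeEval_aeval_X_zero gi)

theorem sub_aeval_shapeEval_mem (g : R[X]) (gi : Fin n → R[X])
    (p : MvPolynomial (Fin (n + 1)) R) :
    p - aeval (MvPolynomial.X 0) (shapeEval gi p) ∈ shapeIdeal g gi := by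
  suffices h : ((Ideal.Quotient.mkₐ R (shapeIdeal g gi)).comp
      ((aeval (MvPolynomial.X 0)).comp (shapeEval gi))) = Ideal.Quotient.mkₐ R _ by
    rw [← Ideal.Quotient.eq]
    exact (DFunLike.congr_fun h p).symm
  refine MvPolynomial.algHom_ext fun j => j.cases ?_ fun i => ?_
  · simp [shapeEval]
  · have : MvPolynomial.X i.succ - aeval (MvPolynomial.X 0) (gi i) ∈ shapeIdeal g gi :=
      Ideal.subset_span (Or.inr ⟨i, rfl⟩)
    simpa [shapeEval] using (Ideal.Quotient.eq.mpr this).symm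

theorem shapeIdeal_le_comap (g : R[X]) (gi : Fin n → R[X]) :
    shapeIdeal g gi ≤ (Ideal.span {g}).comap (shapeEval gi) := by
  refine Ideal.span_le.mpr ?_
  rintro _ (rfl | ⟨i, rfl⟩)
  · simp [shapeEval_aeval_X_zero]
  · rw [SetLike.mem_coe, Ideal.mem_comap, map_sub, shapeEval_aeval_X_zero]
    simp [shapeEval]

theorem map_span_le_shapeIdeal (g : R[X]) (gi : Fin n → R[X]) :
    (Ideal.span {g}).map (aeval (MvPolynomial.X 0) : R[X] →ₐ[R] MvPolynomial (Fin (n + 1)) R)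
      ≤ shapeIdeal g gi := by
  rw [Ideal.map_span, Set.image_singleton]
  exact Ideal.span_mono Set.subset_union_left

theorem shapeIdeal_eq_comap (g : R[X]) (gi : Fin n → R[X]) :
    shapeIdeal g gi = (Ideal.span {g}).comap (shapeEval gi) :=
  Ideal.eq_comap_of_sub_mem (shapeIdeal_le_comap g gi) (map_span_le_shapeIdeal g gi)
    (sub_aeval_shapeEval_mem g gi)

end ShapeLemma

open ShapeLemma in
theorem stmt_8_general {k : Type*} [Field k] (n : ℕ) (g : Polynomial k)
    (hg : g.Monic)
    (gi : Fin n → Polynomial k)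
    (I : Ideal (MvPolynomial (Fin (n + 1)) k))
    (hI : I = Ideal.span
      ({Polynomial.aeval (MvPolynomial.X 0) g} ∪
        Set.range (fun i : Fin n =>
          MvPolynomial.X i.succ -
            Polynomial.aeval (MvPolynomial.X (0 : Fin (n + 1))) (gi i)))) :
    I.IsRadical ↔ Squarefree g := by
  change I = shapeIdeal g gi at hI
  rw [hI, shapeIdeal_eq_comap, Ideal.isRadical_comap_iff_of_surjective (shapeEval_surjective gi),
    ← isRadical_iff_span_singleton, isRadical_iff_squarefree_of_ne_zero hg.ne_zero]

/-- (Shape Lemma, radicality criterion) With `I ⊆ k[x₀,…,xₙ]` generated by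
`g(x₀), x₁ − g₁(x₀), …, xₙ − gₙ(x₀)`, where `k` is perfect, `g` monic of degree `d`, and
`deg gᵢ < d`, the ideal `I` is radical if and only if `g` is squarefree. -/
theorem stmt_8 {k : Type*} [Field k] [PerfectField k] (n d : ℕ) (g : Polynomial k)
    (hg : g.Monic) (hd : g.natDegree = d)
    (gi : Fin n → Polynomial k) (hgi : ∀ i, (gi i).natDegree < d)
    (I : Ideal (MvPolynomial (Fin (n + 1)) k))
    (hI : I = Ideal.span
      ({Polynomial.aeval (MvPolynomial.X 0) g} ∪
        Set.range (fun i : Fin n =>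
          MvPolynomial.X i.succ -
            Polynomial.aeval (MvPolynomial.X (0 : Fin (n + 1))) (gi i)))) :
    I.IsRadical ↔ Squarefree g :=
  stmt_8_general n g hg gi I hI
end

section
/- Conversely, a nonzero vector (p₁₂, p₁₃, p₁₄, p₂₃, p₂₄, p₃₄) ∈ k⁶ satisfying p₁₂p₃₄ − p₁₃p₂₄ + p₁₄p₂₃ = 0 is, up to scalar, the vector of maximal minors of some 2×4 matrix of rank 2 (i.e., arises from a 2-plane in k⁴). -/
/-!
Arrange the coordinates in the alternating matrix `P` with `P i j = p_ij` for `i < j`. The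
Plücker relation says that the Pfaffian of `P` vanishes, and then any two rows of `P` satisfy
`P i a * P j b - P i b * P j a = P i j * P a b`. Choosing `i, j` with `P i j ≠ 0`, the rows
`-P j` and `P i` form a `2 × 4` matrix whose minors are `P i j` times the given vector; its
`(i, j)` minor is `P i j ^ 2 ≠ 0`, so it has rank 2.
-/

theorem Matrix.rank_eq_card_height_of_det_submatrix_ne_zero {m n R : Type*} [Fintype m]
    [DecidableEq m] [Fintype n] [CommRing R] [IsDomain R] (A : Matrix m n R) (e : m → n)
    (h : (A.submatrix id e).det ≠ 0) : A.rank = Fintype.card m :=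
  (rank_le_card_height A).antisymm
    ((rank_of_det_ne_zero h).symm.le.trans (rank_submatrix_le A id e))

def plueckerMatrix {k : Type*} [CommRing k] (p12 p13 p14 p23 p24 p34 : k) :
    Matrix (Fin 4) (Fin 4) k :=
  !![0, p12, p13, p14; -p12, 0, p23, p24; -p13, -p23, 0, p34; -p14, -p24, -p34, 0]

theorem plueckerMatrix_rows_minor {k : Type*} [CommRing k] {p12 p13 p14 p23 p24 p34 : k}
    (hrel : p12 * p34 - p13 * p24 + p14 * p23 = 0) (i j a b : Fin 4) :
    let P := plueckerMatrix p12 p13 p14 p23 p24 p34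
    P i a * P j b - P i b * P j a = P i j * P a b := by
  fin_cases i <;> fin_cases j <;> fin_cases a <;> fin_cases b <;>
    simp [plueckerMatrix] <;> first | ring1 | linear_combination hrel | linear_combination -hrel

/-- Conversely, a nonzero vector `(p₁₂,p₁₃,p₁₄,p₂₃,p₂₄,p₃₄)` satisfying the Plücker relation
`p₁₂p₃₄ − p₁₃p₂₄ + p₁₄p₂₃ = 0` is, up to a nonzero scalar, the vector of 2×2 maximal minors
of some 2×4 matrix of rank 2. -/
theorem stmt_15 {k : Type*} [Field k] (p12 p13 p14 p23 p24 p34 : k)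
    (hne : ¬(p12 = 0 ∧ p13 = 0 ∧ p14 = 0 ∧ p23 = 0 ∧ p24 = 0 ∧ p34 = 0))
    (hrel : p12 * p34 - p13 * p24 + p14 * p23 = 0) :
    ∃ (A : Matrix (Fin 2) (Fin 4) k) (c : k), A.rank = 2 ∧ c ≠ 0 ∧
      A 0 0 * A 1 1 - A 0 1 * A 1 0 = c * p12 ∧
      A 0 0 * A 1 2 - A 0 2 * A 1 0 = c * p13 ∧
      A 0 0 * A 1 3 - A 0 3 * A 1 0 = c * p14 ∧
      A 0 1 * A 1 2 - A 0 2 * A 1 1 = c * p23 ∧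
      A 0 1 * A 1 3 - A 0 3 * A 1 1 = c * p24 ∧
      A 0 2 * A 1 3 - A 0 3 * A 1 2 = c * p34 := by
  set P := plueckerMatrix p12 p13 p14 p23 p24 p34
  obtain ⟨i, j, hij⟩ : ∃ i j, P i j ≠ 0 := by
    by_contra! h
    exact hne ⟨h 0 1, h 0 2, h 0 3, h 1 2, h 1 3, h 2 3⟩
  let A : Matrix (Fin 2) (Fin 4) k := Matrix.of ![-P j, P i]
  have hminor (a b : Fin 4) : A 0 a * A 1 b - A 0 b * A 1 a = P i j * P a b := by
    rw [← plueckerMatrix_rows_minor hrel]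
    simp only [A, Matrix.of_apply, Matrix.cons_val_zero, Matrix.cons_val_one, Pi.neg_apply]
    ring
  have hrank : A.rank = 2 :=
    A.rank_eq_card_height_of_det_submatrix_ne_zero ![i, j] <| by
      simpa [Matrix.det_fin_two, hminor] using mul_ne_zero hij hij
  exact ⟨A, P i j, hrank, hij, hminor 0 1, hminor 0 2, hminor 0 3, hminor 1 2, hminor 1 3,
    hminor 2 3⟩
end

section
/- Let A be a finite-dimensional commutative ℝ-algebra that is a product of fields, A ≅ ℝ^a × ℂ^b (as ℝ-algebras). Then the trace form S₁(f,g) = trace(m_{fg}) has rank a + 2b and signature a; in particular, the signature of the trace form of A equals the number of real points and the rank equals the total number of points. -/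
/-!
The trace of `ℝᵃ × ℂᵇ` is the sum of the traces of its factors, and `Tr_{ℂ/ℝ} z = 2 Re z`.
Hence in the real coordinates `(xᵢ)` of `ℝᵃ` and `(uⱼ + i vⱼ)` of `ℂᵇ` the trace form is
`∑ xᵢ yᵢ + ∑ (2 uⱼ u'ⱼ - 2 vⱼ v'ⱼ)`: diagonal in the basis `{eᵢ} ∪ {1ⱼ, iⱼ}`, with `a + b`
positive and `b` negative entries.
-/

open Finset

namespace Algebra

variable {R ι : Type*} [CommRing R] [Fintype ι] [DecidableEq ι] {S : ι → Type*}
  [∀ i, CommRing (S i)] [∀ i, Algebra R (S i)] [∀ i, Module.Free R (S i)]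
  [∀ i, Module.Finite R (S i)]

theorem trace_pi_apply (x : Π i, S i) : trace R (Π i, S i) x = ∑ i, trace R (S i) (x i) := by
  have hlmul : lmul R (Π i, S i) x
      = ∑ i, LinearMap.single R S i ∘ₗ (lmul R (S i) (x i)) ∘ₗ LinearMap.proj i := by
    refine LinearMap.ext fun y => ?_
    simp [← Finset.univ_sum_single (x * y)]
  rw [trace_apply, hlmul, map_sum]
  refine Finset.sum_congr rfl fun i _ => ?_
  rw [LinearMap.trace_comp_comm', LinearMap.comp_assoc, LinearMap.proj_comp_single_same,
    LinearMap.comp_id, trace_apply]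

end Algebra

namespace Module.Basis

variable {ι R M : Type*} [Fintype ι] [CommSemiring R] [AddCommMonoid M] [Module R M]

theorem card_filter_reindex {κ : Type*} [Fintype κ] (e : Basis ι R M) (σ : ι ≃ κ)
    (p : M → Prop) [DecidablePred p] :
    #{i | p (e.reindex σ i)} = #{k | p (e k)} :=
  Finset.card_equiv σ.symm fun i => by simp

theorem apply_eq_ite_of_eq_weighted_sum [DecidableEq ι] (e : Basis ι R M) (B : M → M → R)
    (w : ι → R) (hB : ∀ x y, B x y = ∑ k, w k * e.repr x k * e.repr y k) (k l : ι) :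
    B (e k) (e l) = if k = l then w k else 0 := by
  by_cases h : k = l <;> simp [hB, Finsupp.single_apply, h]

end Module.Basis

section RealComplex

variable (ι κ : Type*) [Fintype ι] [Fintype κ]

theorem traceForm_real_complex_apply (x y : (ι → ℝ) × (κ → ℂ)) :
    Algebra.traceForm ℝ _ x y = ∑ i, x.1 i * y.1 i + ∑ j, 2 * (x.2 j * y.2 j).re := by
  classical
  simp [Algebra.trace_pi_apply, Algebra.trace_complex_apply]

noncomputable def realComplexBasis : Module.Basis (ι ⊕ Σ _ : κ, Fin 2) ℝ ((ι → ℝ) × (κ → ℂ)) :=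
  (Pi.basisFun ℝ ι).prod (Pi.basis fun _ => Complex.basisOneI)

def realComplexWeight : ι ⊕ (Σ _ : κ, Fin 2) → ℝ :=
  Sum.elim 1 fun s => ![2, -2] s.2

theorem traceForm_real_complex_eq_sum_weight (x y : (ι → ℝ) × (κ → ℂ)) :
    Algebra.traceForm ℝ _ x y = ∑ k, realComplexWeight ι κ k *
      (realComplexBasis ι κ).repr x k * (realComplexBasis ι κ).repr y k := by
  rw [traceForm_real_complex_apply, Fintype.sum_sum_type, Fintype.sum_sigma]
  simp only [realComplexBasis, realComplexWeight, Module.Basis.prod_repr_inl,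
    Module.Basis.prod_repr_inr, Pi.basisFun_repr, Pi.basis_repr, Complex.coe_basisOneI_repr,
    Sum.elim_inl, Sum.elim_inr, Pi.one_apply, one_mul, Fin.sum_univ_two, Matrix.cons_val_zero,
    Matrix.cons_val_one, Matrix.cons_val_fin_one, Complex.mul_re, add_right_inj]
  exact Finset.sum_congr rfl fun _ _ => by ring

theorem card_realComplexWeight_pos :
    #{k | 0 < realComplexWeight ι κ k} = Fintype.card ι + Fintype.card κ := by
  rw [Finset.card_filter, Fintype.sum_sum_type, Fintype.sum_sigma]
  norm_num [realComplexWeight, Fin.sum_univ_two]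

theorem card_realComplexWeight_neg : #{k | realComplexWeight ι κ k < 0} = Fintype.card κ := by
  rw [Finset.card_filter, Fintype.sum_sum_type, Fintype.sum_sigma]
  norm_num [realComplexWeight, Fin.sum_univ_two]

end RealComplex

/-- For the finite-dimensional commutative ℝ-algebra `A = ℝᵃ × ℂᵇ`, the trace form
`S₁(f,g) = trace(m_{fg})` has rank `a + 2b` and signature `a`: there is a basis of `A`
diagonalizing `S₁` with `a + b` positive diagonal entries and `b` negative ones (hence no
zero entries), so the signature equals the number `a` of real points and the rank equals
the total number `a + b` of points. -/
theorem stmt_19 (a b : ℕ) :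
    let A := (Fin a → ℝ) × (Fin b → ℂ)
    let S : A → A → ℝ := fun f g => LinearMap.trace ℝ A (LinearMap.mulLeft ℝ (f * g))
    ∃ e : Module.Basis (Fin (a + 2 * b)) ℝ A,
      (∀ i j, i ≠ j → S (e i) (e j) = 0) ∧
      (Finset.univ.filter fun i => 0 < S (e i) (e i)).card = a + b ∧
      (Finset.univ.filter fun i => S (e i) (e i) < 0).card = b := by
  intro A S
  have hS : ∀ k l, S (realComplexBasis _ _ k) (realComplexBasis _ _ l)
      = if k = l then realComplexWeight (Fin a) (Fin b) k else 0 :=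
    (realComplexBasis _ _).apply_eq_ite_of_eq_weighted_sum _ _
      (traceForm_real_complex_eq_sum_weight _ _)
  have hcard : Fintype.card (Fin a ⊕ Σ _ : Fin b, Fin 2) = a + 2 * b := by
    simp [mul_comm]
  let σ := Fintype.equivFinOfCardEq hcard
  refine ⟨(realComplexBasis _ _).reindex σ, fun i j hij => ?_, ?_, ?_⟩
  · simp [hS, Module.Basis.reindex_apply, hij]
  · refine ((realComplexBasis _ _).card_filter_reindex σ fun v => 0 < S v v).trans ?_
    simpa [hS] using card_realComplexWeight_pos (Fin a) (Fin b)
  · refine ((realComplexBasis _ _).card_filter_reindex σ fun v => S v v < 0).trans ?_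
    simpa [hS] using card_realComplexWeight_neg (Fin a) (Fin b)
end
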